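/- Let C = (V, Σ, P, S) be a context-free grammar and let A, B ∈ V. Let C̃ be the grammar obtained from C by adding the productions A → B and B → A. Then for every nonterminal X, the set of strings derivable from X in C̃ equals the set of strings derivable from X in the grammar obtained by equating A and B in C (with the fresh nonterminal identified appropriately). -/

import Mathlib

/-- Relabel a symbol along a map of nonterminals. -/
def mapSymbol {T N N' : Type*} (f : N → N') : Symbol T N → Symbol T N'
  | .terminal t => .terminal t
  | .nonterminal n => .nonterminal (f n)

/-- Relabel a context-free rule along a map of nonterminals. -/
def mapRule {T N N' : Type*} (f : N → N') (r : ContextFreeRule T N) :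
    ContextFreeRule T N' :=
  ⟨f r.input, r.output.map (mapSymbol f)⟩

/-- Relabel all nonterminals of a grammar along a map `f`. -/
noncomputable def mapGrammar {T : Type*} (g : ContextFreeGrammar T) {N' : Type}
    (f : g.NT → N') : ContextFreeGrammar T :=
  haveI := Classical.decEq (ContextFreeRule T N')
  ⟨N', f g.initial, g.rules.image (mapRule f)⟩

/-- The map collapsing the two nonterminals `A` and `B` to a fresh nonterminal
(`none`), leaving all other nonterminals unchanged. -/
noncomputable def collapse {N : Type} (A B : N) (x : N) : Option N :=
  haveI := Classical.propDecidable (x = A ∨ x = B)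
  if x = A ∨ x = B then none else some x

/-- The grammar obtained from `g` by adding the productions `A → B` and `B → A`. -/
noncomputable def addBidirRules {T : Type*} (g : ContextFreeGrammar T)
    (A B : g.NT) : ContextFreeGrammar T :=
  haveI := Classical.decEq (ContextFreeRule T g.NT)
  ⟨g.NT, g.initial,
    insert ⟨A, [Symbol.nonterminal B]⟩ (insert ⟨B, [Symbol.nonterminal A]⟩ g.rules)⟩

/-!
Write `f` for the map identifying `A` and `B`. Relabelling along `f` turns every step of the
grammar with the productions `A → B`, `B → A` added into at most one step of the collapsed grammar,
since the new productions become trivial. Conversely, a derivation in the collapsed grammar lifts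
step by step: a production `f r` applies to an occurrence of `f x` coming from some `x` with
`f x = f r.input`, and then `x` and `r.input` are equal or both lie in `{A, B}`, so the added
productions first rewrite `x` to `r.input` and `r` applies. Terminal strings are their own unique
preimage under the relabelling.
-/

open ContextFreeGrammar

section Relabel

variable {T : Type*} {N N' : Type*}

lemma map_mapSymbol_map_terminal (f : N → N') (w : List T) :
    (w.map Symbol.terminal).map (mapSymbol f) = w.map Symbol.terminal := by
  induction w with
  | nil => rfl
  | cons a w ih => simp [mapSymbol, ih]

lemma eq_map_terminal_of_map_mapSymbol_eq {f : N → N'} {v : List (Symbol T N)} {w : List T}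
    (h : v.map (mapSymbol f) = w.map Symbol.terminal) : v = w.map Symbol.terminal := by
  induction v generalizing w with
  | nil => simpa using h.symm
  | cons s v ih =>
    obtain _ | ⟨a, w⟩ := w
    · simp at h
    simp only [List.map_cons, List.cons.injEq] at h
    cases s with
    | terminal t =>
      simp only [mapSymbol, Symbol.terminal.injEq] at h
      rw [h.1, ih h.2, List.map_cons]
    | nonterminal n => simp [mapSymbol] at h

lemma map_mapSymbol_eq_append_nonterminal {f : N → N'}
    {m : List (Symbol T N)} {p' q' : List (Symbol T N')} {n' : N'}
    (h : m.map (mapSymbol f) = p' ++ [Symbol.nonterminal n'] ++ q') :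
    ∃ p x q, m = p ++ [Symbol.nonterminal x] ++ q ∧ p.map (mapSymbol f) = p' ∧
      f x = n' ∧ q.map (mapSymbol f) = q' := by
  rw [List.append_assoc] at h
  obtain ⟨p, rest, rfl, hp, hrest⟩ := List.map_eq_append_iff.mp h
  obtain ⟨s, q, rfl, hs, hq⟩ := List.map_eq_cons_iff.mp hrest
  cases s with
  | terminal t => simp [mapSymbol] at hs
  | nonterminal x =>
    simp only [mapSymbol, Symbol.nonterminal.injEq] at hs
    exact ⟨p, x, q, by simp, hp, hs, hq⟩

end Relabel

section Simulation

variable {T : Type*} {g₁ g₂ : ContextFreeGrammar T} {f : g₁.NT → g₂.NT}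

theorem ContextFreeGrammar.Derives.map_mapSymbol
    (hf : ∀ r ∈ g₁.rules,
      g₂.Derives [Symbol.nonterminal (f r.input)] (r.output.map (mapSymbol f)))
    {u v : List (Symbol T g₁.NT)} (h : g₁.Derives u v) :
    g₂.Derives (u.map (mapSymbol f)) (v.map (mapSymbol f)) := by
  induction h with
  | refl => rfl
  | tail _ hstep ih =>
    obtain ⟨r, hr, hrw⟩ := hstep
    obtain ⟨p, q, rfl, rfl⟩ := hrw.exists_parts
    refine ih.trans ?_
    simpa only [List.map_append, List.map_cons, List.map_nil, mapSymbol] using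
      ((hf r hr).append_left _).append_right _

theorem ContextFreeGrammar.Produces.exists_lift
    (hrules : ∀ r ∈ g₂.rules, ∃ r₀ ∈ g₁.rules, mapRule f r₀ = r)
    (hfiber : ∀ x y, f x = f y → g₁.Derives [Symbol.nonterminal x] [Symbol.nonterminal y])
    {m : List (Symbol T g₁.NT)}
    {v' : List (Symbol T g₂.NT)} (h : g₂.Produces (m.map (mapSymbol f)) v') :
    ∃ v, v.map (mapSymbol f) = v' ∧ g₁.Derives m v := by
  obtain ⟨r, hr, hrw⟩ := h
  obtain ⟨r₀, hr₀, rfl⟩ := hrules r hr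
  obtain ⟨p', q', hm, rfl⟩ := hrw.exists_parts
  obtain ⟨p, x, q, rfl, rfl, hx, rfl⟩ := map_mapSymbol_eq_append_nonterminal hm
  refine ⟨p ++ r₀.output ++ q, by simp [mapRule], ?_⟩
  have hswap : g₁.Derives (p ++ [Symbol.nonterminal x] ++ q)
      (p ++ [Symbol.nonterminal r₀.input] ++ q) :=
    ((hfiber x r₀.input hx).append_left p).append_right q
  exact hswap.trans_produces ⟨r₀, hr₀, ContextFreeRule.rewrites_of_exists_parts r₀ p q⟩

theorem ContextFreeGrammar.Derives.exists_lift
    (hrules : ∀ r ∈ g₂.rules, ∃ r₀ ∈ g₁.rules, mapRule f r₀ = r)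
    (hfiber : ∀ x y, f x = f y → g₁.Derives [Symbol.nonterminal x] [Symbol.nonterminal y])
    {u : List (Symbol T g₁.NT)}
    {v' : List (Symbol T g₂.NT)} (h : g₂.Derives (u.map (mapSymbol f)) v') :
    ∃ v, v.map (mapSymbol f) = v' ∧ g₁.Derives u v := by
  induction h with
  | refl => exact ⟨u, rfl, .refl u⟩
  | tail _ hstep ih =>
    obtain ⟨m, rfl, hum⟩ := ih
    obtain ⟨v, rfl, hmv⟩ := hstep.exists_lift hrules hfiber
    exact ⟨v, rfl, hum.trans hmv⟩

end Simulation

section Collapse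

variable {T : Type*}

lemma collapse_eq_collapse_iff {N : Type} {A B x y : N} :
    collapse A B x = collapse A B y ↔ x = y ∨ (x = A ∨ x = B) ∧ (y = A ∨ y = B) := by
  unfold collapse
  split_ifs <;> grind

lemma mem_mapGrammar_rules {g : ContextFreeGrammar T} {N' : Type} {f : g.NT → N'}
    {r : ContextFreeRule T N'} :
    r ∈ (mapGrammar g f).rules ↔ ∃ r₀ ∈ g.rules, mapRule f r₀ = r :=
  @Finset.mem_image _ _ (Classical.decEq _) _ _ _

lemma mem_addBidirRules_rules {g : ContextFreeGrammar T} {A B : g.NT}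
    {r : ContextFreeRule T g.NT} :
    r ∈ (addBidirRules g A B).rules ↔
      r = ⟨A, [Symbol.nonterminal B]⟩ ∨ r = ⟨B, [Symbol.nonterminal A]⟩ ∨ r ∈ g.rules := by
  let _ := Classical.decEq (ContextFreeRule T g.NT)
  exact Finset.mem_insert.trans (or_congr_right Finset.mem_insert)

lemma addBidirRules_derives_of_collapse_eq {g : ContextFreeGrammar T} {A B x y : g.NT}
    (h : collapse A B x = collapse A B y) :
    (addBidirRules g A B).Derives [Symbol.nonterminal x] [Symbol.nonterminal y] := by
  have hAB : (addBidirRules g A B).Derives [Symbol.nonterminal A] [Symbol.nonterminal B] :=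
    Produces.single ⟨_, mem_addBidirRules_rules.mpr (.inl rfl), .input_output⟩
  have hBA : (addBidirRules g A B).Derives [Symbol.nonterminal B] [Symbol.nonterminal A] :=
    Produces.single ⟨_, mem_addBidirRules_rules.mpr (.inr (.inl rfl)), .input_output⟩
  obtain rfl | ⟨hx | hx, hy | hy⟩ := collapse_eq_collapse_iff.mp h <;> subst_vars
  exacts [.refl _, .refl _, hAB, hBA, .refl _]

lemma mapGrammar_collapse_derives_of_mem_addBidirRules {g : ContextFreeGrammar T} {A B : g.NT}
    {r : ContextFreeRule T g.NT} (hr : r ∈ (addBidirRules g A B).rules) :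
    (mapGrammar g (collapse A B)).Derives [Symbol.nonterminal (collapse A B r.input)]
      (r.output.map (mapSymbol (collapse A B))) := by
  have hAB : collapse A B A = collapse A B B :=
    collapse_eq_collapse_iff.mpr (.inr ⟨.inl rfl, .inr rfl⟩)
  obtain rfl | rfl | hr := mem_addBidirRules_rules.mp hr
  · simp only [List.map_cons, List.map_nil, mapSymbol, hAB]
    rfl
  · simp only [List.map_cons, List.map_nil, mapSymbol, hAB]
    rfl
  · exact Produces.single ⟨mapRule _ r, mem_mapGrammar_rules.mpr ⟨r, hr, rfl⟩, .input_output⟩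

end Collapse

/-- adding productions `A → B` and `B → A` to a grammar yields, for every
nonterminal `X`, exactly the same set of derivable terminal strings as equating `A`
and `B` (with the fresh nonterminal identified via the collapsing map). -/
theorem stmt7 {T : Type*} (g : ContextFreeGrammar T) (A B : g.NT) (X : g.NT)
    (w : List T) :
    (addBidirRules g A B).Derives [Symbol.nonterminal X] (w.map Symbol.terminal) ↔
      (mapGrammar g (collapse A B)).Derives [Symbol.nonterminal (collapse A B X)]
        (w.map Symbol.terminal) := by
  constructor
  · intro h
    have := h.map_mapSymbol (g₂ := mapGrammar g (collapse A B)) fun _ ↦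
      mapGrammar_collapse_derives_of_mem_addBidirRules
    exact map_mapSymbol_map_terminal (collapse A B) w ▸ this
  · intro h
    have hrules : ∀ r ∈ (mapGrammar g (collapse A B)).rules,
        ∃ r₀ ∈ (addBidirRules g A B).rules, mapRule (collapse A B) r₀ = r := fun r hr ↦ by
      obtain ⟨r₀, hr₀, rfl⟩ := mem_mapGrammar_rules.mp hr
      exact ⟨r₀, mem_addBidirRules_rules.mpr (.inr (.inr hr₀)), rfl⟩
    obtain ⟨v, hv, hder⟩ := Derives.exists_lift hrules
      (fun _ _ ↦ addBidirRules_derives_of_collapse_eq) (u := [Symbol.nonterminal X]) h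
    rwa [eq_map_terminal_of_map_mapSymbol_eq hv] at hder
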